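/- arXiv:2604.18310 — 2 statements merged into one kernel-verified Lean document; each statement's English description precedes it below -/
import Mathlib

section
/- Fix m ∈ ℝ^d. Let P be a probability measure on ℝ^d with finite first moment that is even symmetric about m, and let 𝒬 be the location–scale family generated by a base distribution Q₀ with finite first moment that is even symmetric about 0. If the map (ν, S) ↦ KL(P ‖ Q_{ν,S}) has a unique minimiser (ν*, S*) over ℝ^d × (positive definite matrices), then the mean of Q_{ν*,S*} equals the mean of P, which equals m. -/
open MeasureTheory Matrix Classical
open scoped ENNReal

/-- The Kullback–Leibler divergence. -/
noncomputable def klDiv {X : Type*} [MeasurableSpace X] (P Q : Measure X) : EReal :=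
  if P ≪ Q ∧ Integrable (llr P Q) P then ((∫ x, llr P Q x ∂P : ℝ) : EReal) else ⊤

/-- The location–scale distribution `Q_{ν,S} = (T_{ν,S})_# Q₀` with `T_{ν,S}(x) = ν + S^{1/2} x`. -/
noncomputable def locScale {d : ℕ} (Q₀ : Measure (Fin d → ℝ)) (ν : Fin d → ℝ)
    {S : Matrix (Fin d) (Fin d) ℝ} (hS : S.PosDef) : Measure (Fin d → ℝ) :=
  Measure.map (fun x => ν + ((hS.posSemidef.1.eigenvectorUnitary : Matrix (Fin d) (Fin d) ℝ) * diagonal (RCLike.ofReal ∘ Real.sqrt ∘ hS.posSemidef.1.eigenvalues) *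
    (star hS.posSemidef.1.eigenvectorUnitary : Matrix (Fin d) (Fin d) ℝ)).mulVec x) Q₀

section Aux

variable {X Y : Type*} [MeasurableSpace X] [MeasurableSpace Y]

/-- KL divergence is invariant under pushforward by a measurable equivalence. -/
lemma klDiv_map_equiv (e : X ≃ᵐ Y) (P Q : Measure X)
    [IsProbabilityMeasure P] [IsProbabilityMeasure Q] :
    klDiv (P.map e) (Q.map e) = klDiv P Q := by
  have hPm : IsProbabilityMeasure (P.map e) :=
    Measure.isProbabilityMeasure_map e.measurable.aemeasurable
  have hQm : IsProbabilityMeasure (Q.map e) :=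
    Measure.isProbabilityMeasure_map e.measurable.aemeasurable
  have hac : (P.map e ≪ Q.map e) ↔ P ≪ Q := by
    constructor
    · intro h
      have := h.map (f := e.symm) e.symm.measurable
      simpa [Measure.map_map e.symm.measurable e.measurable] using this
    · intro h; exact h.map e.measurable
  by_cases hPQ : P ≪ Q
  · have hrn := e.measurableEmbedding.rnDeriv_map P Q
    have hllr : (fun x => llr (P.map e) (Q.map e) (e x)) =ᵐ[P] llr P Q := by
      filter_upwards [hPQ.ae_le hrn] with x hx
      simp only [llr, hx]
    have hint : Integrable (llr (P.map e) (Q.map e)) (P.map e) ↔ Integrable (llr P Q) P := by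
      rw [integrable_map_measure (stronglyMeasurable_llr _ _).aestronglyMeasurable
        e.measurable.aemeasurable]
      exact integrable_congr hllr
    have hval : (∫ x, llr (P.map e) (Q.map e) x ∂(P.map e)) = ∫ x, llr P Q x ∂P := by
      rw [integral_map e.measurable.aemeasurable
        (stronglyMeasurable_llr _ _).aestronglyMeasurable]
      exact integral_congr_ae hllr
    simp only [klDiv, hac, hint, hval]
  · simp only [klDiv, hac]
    rw [if_neg (fun h => hPQ h.1), if_neg (fun h => hPQ h.1)]

end Aux

section Refl

variable {d : ℕ}

/-- Reflection about `m` as a measurable equivalence. -/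
noncomputable def reflEquiv (m : Fin d → ℝ) : (Fin d → ℝ) ≃ᵐ (Fin d → ℝ) where
  toEquiv :=
    { toFun := fun x => (2 : ℝ) • m - x
      invFun := fun x => (2 : ℝ) • m - x
      left_inv := fun x => sub_sub_cancel _ _
      right_inv := fun x => sub_sub_cancel _ _ }
  measurable_toFun := (measurable_const.sub measurable_id)
  measurable_invFun := (measurable_const.sub measurable_id)

lemma reflEquiv_apply (m x : Fin d → ℝ) : reflEquiv m x = (2 : ℝ) • m - x := rfl

lemma map_reflEquiv_eq_self (m : Fin d → ℝ) (μ : Measure (Fin d → ℝ))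
    (hsym : ∀ A : Set (Fin d → ℝ), MeasurableSet A →
      μ A = μ ((fun x => (2 : ℝ) • m - x) '' A)) :
    μ.map (reflEquiv m) = μ := by
  ext A hA
  rw [Measure.map_apply (reflEquiv m).measurable hA]
  have himg : (fun x => (2 : ℝ) • m - x) '' A = (reflEquiv m) ⁻¹' A := by
    ext x
    simp only [Set.mem_image]
    constructor
    · rintro ⟨y, hy, rfl⟩
      show (2 : ℝ) • m - ((2 : ℝ) • m - y) ∈ A
      rwa [sub_sub_cancel]
    · intro hx
      exact ⟨(2 : ℝ) • m - x, hx, sub_sub_cancel _ _⟩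
  rw [← himg, ← hsym A hA]

/-- The mean of a measure symmetric about `m` is `m`. -/
lemma mean_of_symm (m : Fin d → ℝ) (μ : Measure (Fin d → ℝ)) [IsProbabilityMeasure μ]
    (hint : Integrable (fun x => x) μ)
    (hmap : μ.map (reflEquiv m) = μ) :
    (∫ x, x ∂μ) = m := by
  have h1 : (∫ x, x ∂μ) = (2 : ℝ) • m - ∫ x, x ∂μ := by
    conv_lhs => rw [← hmap]
    have hmm : (∫ x, x ∂(μ.map (reflEquiv m))) = ∫ x, ((2 : ℝ) • m - x) ∂μ :=
      integral_map (reflEquiv m).measurable.aemeasurable aestronglyMeasurable_id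
    rw [hmm, integral_sub (integrable_const _) hint, integral_const, probReal_univ]
    simp
  have h3 : (2 : ℝ) • (∫ x, x ∂μ) = (2 : ℝ) • m := by
    rw [two_smul]
    exact eq_sub_iff_add_eq.mp h1
  exact smul_right_injective _ (by norm_num : (2 : ℝ) ≠ 0) h3

end Refl

section LocScale

variable {d : ℕ}

lemma measurable_affine (ν : Fin d → ℝ) (A : Matrix (Fin d) (Fin d) ℝ) :
    Measurable (fun x => ν + A.mulVec x) := by
  have hc : Continuous (fun x : Fin d → ℝ => A.mulVec x) :=
    LinearMap.continuous_of_finiteDimensional A.mulVecLin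
  exact (continuous_const.add hc).measurable

lemma map_neg_eq_self (Q₀ : Measure (Fin d → ℝ))
    (hQ₀sym : ∀ A : Set (Fin d → ℝ), MeasurableSet A →
      Q₀ A = Q₀ ((fun x => -x) '' A)) :
    Q₀.map (fun x => -x) = Q₀ := by
  have : Q₀.map (reflEquiv (0 : Fin d → ℝ)) = Q₀ := by
    apply map_reflEquiv_eq_self
    intro A hA
    simpa using hQ₀sym A hA
  have he : ⇑(reflEquiv (0 : Fin d → ℝ)) = fun x : Fin d → ℝ => -x := by
    funext x; simp [reflEquiv_apply]
  rwa [he] at this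

lemma mean_affine_map (Q₀ : Measure (Fin d → ℝ)) [IsProbabilityMeasure Q₀]
    (hQ₀int : Integrable (fun x => x) Q₀) (hQ₀mean : (∫ x, x ∂Q₀) = 0)
    (ν : Fin d → ℝ) (A : Matrix (Fin d) (Fin d) ℝ) :
    (∫ x, x ∂(Q₀.map (fun x => ν + A.mulVec x))) = ν := by
  set L : (Fin d → ℝ) →L[ℝ] (Fin d → ℝ) := LinearMap.toContinuousLinearMap A.mulVecLin with hLdef
  have hiL : Integrable (fun x => A.mulVec x) Q₀ := L.integrable_comp hQ₀int
  have h0 : (∫ x, x ∂(Q₀.map (fun x => ν + A.mulVec x))) = ∫ x, (ν + A.mulVec x) ∂Q₀ :=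
    integral_map (measurable_affine ν A).aemeasurable aestronglyMeasurable_id
  rw [h0, integral_add (integrable_const _) hiL, integral_const, probReal_univ]
  have h1 : (∫ x, A.mulVec x ∂Q₀) = A.mulVec (∫ x, x ∂Q₀) := L.integral_comp_comm hQ₀int
  rw [h1, hQ₀mean]
  simp

lemma map_refl_locScale (m : Fin d → ℝ) (Q₀ : Measure (Fin d → ℝ)) [IsProbabilityMeasure Q₀]
    (hQ₀sym : ∀ A : Set (Fin d → ℝ), MeasurableSet A →
      Q₀ A = Q₀ ((fun x => -x) '' A))
    (ν : Fin d → ℝ) {S : Matrix (Fin d) (Fin d) ℝ} (hS : S.PosDef) :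
    (locScale Q₀ ν hS).map (reflEquiv m) = locScale Q₀ ((2 : ℝ) • m - ν) hS := by
  set A := ((hS.posSemidef.1.eigenvectorUnitary : Matrix (Fin d) (Fin d) ℝ) * diagonal (RCLike.ofReal ∘ Real.sqrt ∘ hS.posSemidef.1.eigenvalues) *
    (star hS.posSemidef.1.eigenvectorUnitary : Matrix (Fin d) (Fin d) ℝ))
  rw [locScale, Measure.map_map (reflEquiv m).measurable (measurable_affine ν A)]
  have hcomp : (⇑(reflEquiv m) ∘ fun x => ν + A.mulVec x)
      = (fun x => ((2 : ℝ) • m - ν) + A.mulVec x) ∘ (fun x : Fin d → ℝ => -x) := by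
    funext x
    simp only [Function.comp_apply, reflEquiv_apply, Matrix.mulVec_neg]
    abel
  rw [hcomp, ← Measure.map_map (measurable_affine _ A) (measurable_neg),
    map_neg_eq_self Q₀ hQ₀sym, locScale]

end LocScale

/-- Mean recovery under even symmetry: if the target `P` is even symmetric about `m`, the base
distribution `Q₀` of the location–scale family is even symmetric about `0`, both have finite
first moment, and `(ν, S) ↦ KL(P ‖ Q_{ν,S})` has a unique minimiser `(ν⋆, S⋆)`, then the mean of
`Q_{ν⋆,S⋆}` equals the mean of `P`, which equals `m`. -/
theorem mean_recovery_even_symmetry {d : ℕ}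
    (m : Fin d → ℝ)
    (P : Measure (Fin d → ℝ)) [IsProbabilityMeasure P]
    (hPint : Integrable (fun x => x) P)
    (hPsym : ∀ A : Set (Fin d → ℝ), MeasurableSet A →
      P A = P ((fun x => (2 : ℝ) • m - x) '' A))
    (Q₀ : Measure (Fin d → ℝ)) [IsProbabilityMeasure Q₀]
    (hQ₀int : Integrable (fun x => x) Q₀)
    (hQ₀sym : ∀ A : Set (Fin d → ℝ), MeasurableSet A →
      Q₀ A = Q₀ ((fun x => -x) '' A))
    (νstar : Fin d → ℝ) (Sstar : Matrix (Fin d) (Fin d) ℝ) (hSstar : Sstar.PosDef)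
    (hmin : ∀ (ν : Fin d → ℝ) (S : Matrix (Fin d) (Fin d) ℝ) (hS : S.PosDef),
      klDiv P (locScale Q₀ νstar hSstar) ≤ klDiv P (locScale Q₀ ν hS))
    (huniq : ∀ (ν : Fin d → ℝ) (S : Matrix (Fin d) (Fin d) ℝ) (hS : S.PosDef),
      (∀ (ν' : Fin d → ℝ) (S' : Matrix (Fin d) (Fin d) ℝ) (hS' : S'.PosDef),
        klDiv P (locScale Q₀ ν hS) ≤ klDiv P (locScale Q₀ ν' hS')) →
      ν = νstar ∧ S = Sstar) :
    (∫ x, x ∂(locScale Q₀ νstar hSstar)) = m ∧ (∫ x, x ∂P) = m := by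
  have hPmap : P.map (reflEquiv m) = P := map_reflEquiv_eq_self m P hPsym
  -- instances for locScale
  have hLSprob : ∀ (ν : Fin d → ℝ) (S : Matrix (Fin d) (Fin d) ℝ) (hS : S.PosDef),
      IsProbabilityMeasure (locScale Q₀ ν hS) := fun ν S hS =>
    Measure.isProbabilityMeasure_map (measurable_affine ν _).aemeasurable
  -- the reflected parameters also minimise
  have hkey : klDiv P (locScale Q₀ ((2 : ℝ) • m - νstar) hSstar)
      = klDiv P (locScale Q₀ νstar hSstar) := by
    have := hLSprob νstar Sstar hSstar
    calc klDiv P (locScale Q₀ ((2 : ℝ) • m - νstar) hSstar)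
        = klDiv (P.map (reflEquiv m)) ((locScale Q₀ νstar hSstar).map (reflEquiv m)) := by
          rw [hPmap, map_refl_locScale m Q₀ hQ₀sym νstar hSstar]
      _ = klDiv P (locScale Q₀ νstar hSstar) := klDiv_map_equiv _ _ _
  have hνrefl : (2 : ℝ) • m - νstar = νstar := by
    have hmin' : ∀ (ν' : Fin d → ℝ) (S' : Matrix (Fin d) (Fin d) ℝ) (hS' : S'.PosDef),
        klDiv P (locScale Q₀ ((2 : ℝ) • m - νstar) hSstar) ≤ klDiv P (locScale Q₀ ν' hS') := by
      intro ν' S' hS'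
      rw [hkey]; exact hmin ν' S' hS'
    exact (huniq _ _ hSstar hmin').1
  have hνm : νstar = m := by
    have h2 : (2 : ℝ) • νstar = (2 : ℝ) • m := by
      rw [two_smul]
      exact (sub_eq_iff_eq_add.mp hνrefl).symm
    exact smul_right_injective _ (by norm_num : (2 : ℝ) ≠ 0) h2
  -- mean of Q₀ is zero
  have hQ₀mean : (∫ x, x ∂Q₀) = 0 := by
    have hmap : Q₀.map (reflEquiv (0 : Fin d → ℝ)) = Q₀ := by
      apply map_reflEquiv_eq_self
      intro A hA
      simpa using hQ₀sym A hA
    exact mean_of_symm 0 Q₀ hQ₀int hmap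
  -- mean of locScale
  have hmeanLS : (∫ x, x ∂(locScale Q₀ νstar hSstar)) = νstar :=
    mean_affine_map Q₀ hQ₀int hQ₀mean νstar _
  refine ⟨by rw [hmeanLS, hνm], mean_of_symm m P hPint hPmap⟩
end

section
/- Fix κ > 0 and d ≥ 3, and let T be a random variable on [−1, 1] with density proportional to e^{κt}(1 − t²)^{(d−3)/2}. Then E[T] > 0 and E[T²] > 1/d. -/
open MeasureTheory Real

private lemma contW {c : ℝ} (hc : 0 ≤ c) :
    Continuous fun t : ℝ => (1 - t ^ 2) ^ c :=
  (Real.continuous_rpow_const hc).comp (by continuity)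

private lemma contE (κ : ℝ) : Continuous fun t : ℝ => Real.exp (κ * t) :=
  Real.continuous_exp.comp (by continuity)

private lemma odd_pos {c κ : ℝ} (hc : 0 ≤ c) (hκ : 0 < κ) :
    0 < ∫ t in (-1:ℝ)..1, t * (Real.exp (κ * t) * (1 - t ^ 2) ^ c) := by
  set f : ℝ → ℝ := fun t => t * (Real.exp (κ * t) * (1 - t ^ 2) ^ c) with hf
  have hcont : Continuous f := continuous_id.mul ((contE κ).mul (contW hc))
  have hcontneg : Continuous fun t => f (-t) := hcont.comp continuous_neg
  set g : ℝ → ℝ := fun t => t * ((Real.exp (κ * t) - Real.exp (-(κ * t))) * (1 - t ^ 2) ^ c)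
    with hg
  have h1 : (∫ t in (-1:ℝ)..0, f t) + ∫ t in (0:ℝ)..1, f t = ∫ t in (-1:ℝ)..1, f t :=
    intervalIntegral.integral_add_adjacent_intervals (hcont.intervalIntegrable _ _)
      (hcont.intervalIntegrable _ _)
  have h2 : (∫ t in (0:ℝ)..1, f (-t)) = ∫ t in (-1:ℝ)..0, f t := by
    simpa using intervalIntegral.integral_comp_neg f (a := 0) (b := 1)
  have h3 : (∫ t in (0:ℝ)..1, (f (-t) + f t)) = (∫ t in (0:ℝ)..1, f (-t)) +
      ∫ t in (0:ℝ)..1, f t :=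
    intervalIntegral.integral_add (hcontneg.intervalIntegrable _ _)
      (hcont.intervalIntegrable _ _)
  have h4 : (∫ t in (0:ℝ)..1, (f (-t) + f t)) = ∫ t in (0:ℝ)..1, g t := by
    apply intervalIntegral.integral_congr
    intro x _
    simp only [hf, hg, neg_sq, mul_neg, neg_mul]
    ring
  have hgpos : 0 < ∫ t in (0:ℝ)..1, g t := by
    apply intervalIntegral.intervalIntegral_pos_of_pos_on
    · exact (continuous_id.mul (((contE κ).sub
        (Real.continuous_exp.comp (by continuity))).mul
        (contW hc))).intervalIntegrable _ _
    · intro x hx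
      have hx0 : 0 < x := hx.1
      have hx1 : x < 1 := hx.2
      apply mul_pos hx0
      apply mul_pos
      · have : -(κ * x) < κ * x := by nlinarith
        linarith [Real.exp_lt_exp.2 this]
      · exact Real.rpow_pos_of_pos (by nlinarith) c
    · norm_num
  rw [← h1, ← h2]
  calc (0:ℝ) < ∫ t in (0:ℝ)..1, g t := hgpos
    _ = (∫ t in (0:ℝ)..1, f (-t)) + ∫ t in (0:ℝ)..1, f t := by rw [← h4, h3]

/-- For `κ > 0` and `d ≥ 3`, the distribution on `[−1,1]` with density proportional to
`e^{κt}(1 − t²)^{(d−3)/2}` satisfies `E[T] > 0` and `E[T²] > 1/d`. -/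
theorem vMF_marginal_moments {d : ℕ} (hd : 3 ≤ d) (κ : ℝ) (hκ : 0 < κ) :
    0 < (∫ t in Set.Icc (-1 : ℝ) 1,
          t * (Real.exp (κ * t) * (1 - t ^ 2) ^ (((d : ℝ) - 3) / 2))) /
        (∫ t in Set.Icc (-1 : ℝ) 1,
          Real.exp (κ * t) * (1 - t ^ 2) ^ (((d : ℝ) - 3) / 2)) ∧
    1 / (d : ℝ) < (∫ t in Set.Icc (-1 : ℝ) 1,
          t ^ 2 * (Real.exp (κ * t) * (1 - t ^ 2) ^ (((d : ℝ) - 3) / 2))) /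
        (∫ t in Set.Icc (-1 : ℝ) 1,
          Real.exp (κ * t) * (1 - t ^ 2) ^ (((d : ℝ) - 3) / 2)) := by
  have hd3 : (3:ℝ) ≤ (d:ℝ) := by exact_mod_cast hd
  set c : ℝ := ((d : ℝ) - 3) / 2 with hcdef
  set β : ℝ := ((d : ℝ) - 1) / 2 with hβdef
  have hc : 0 ≤ c := by simp only [hcdef]; linarith
  have hβ : 1 ≤ β := by simp only [hβdef]; linarith
  have hβ0 : β ≠ 0 := by linarith
  have hconv : ∀ f : ℝ → ℝ, (∫ t in Set.Icc (-1 : ℝ) 1, f t) = ∫ t in (-1:ℝ)..1, f t := by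
    intro f
    rw [integral_Icc_eq_integral_Ioc, ← intervalIntegral.integral_of_le (by norm_num : (-1:ℝ) ≤ 1)]
  have hcontW := contW hc
  have hcontE := contE κ
  -- denominator positive
  have hZ : 0 < ∫ t in (-1:ℝ)..1, Real.exp (κ * t) * (1 - t ^ 2) ^ c := by
    apply intervalIntegral.intervalIntegral_pos_of_pos_on
      ((hcontE.mul hcontW).intervalIntegrable _ _)
    · intro x hx
      exact mul_pos (Real.exp_pos _) (Real.rpow_pos_of_pos (by nlinarith [hx.1, hx.2]) c)
    · norm_num
  constructor
  · rw [hconv, hconv]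
    exact div_pos (odd_pos hc hκ) hZ
  -- second moment
  · rw [hconv, hconv]
    set Z : ℝ := ∫ t in (-1:ℝ)..1, Real.exp (κ * t) * (1 - t ^ 2) ^ c with hZdef
    set N : ℝ := ∫ t in (-1:ℝ)..1, t ^ 2 * (Real.exp (κ * t) * (1 - t ^ 2) ^ c) with hNdef
    -- integration by parts
    have hu : ∀ x ∈ Set.uIcc (-1:ℝ) 1,
        HasDerivAt (fun t => Real.exp (κ * t)) (κ * Real.exp (κ * x)) x := by
      intro x _
      have h0 : HasDerivAt (fun t : ℝ => κ * t) (κ * 1) x := (hasDerivAt_id x).const_mul κ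
      simpa [mul_comm, Function.comp_def] using (Real.hasDerivAt_exp (κ * x)).comp x h0
    have hv : ∀ x ∈ Set.uIcc (-1:ℝ) 1,
        HasDerivAt (fun t => t * (1 - t ^ 2) ^ β)
          ((1 - x ^ 2) ^ c * (1 - (d : ℝ) * x ^ 2)) x := by
      intro x hx
      rw [Set.uIcc_of_le (by norm_num : (-1:ℝ) ≤ 1)] at hx
      have hx2 : 0 ≤ 1 - x ^ 2 := by nlinarith [hx.1, hx.2]
      have h1 : HasDerivAt (fun t : ℝ => 1 - t ^ 2) (-(2 * x)) x := by
        simpa using (hasDerivAt_pow 2 x).const_sub 1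
      have h2 : HasDerivAt (fun y : ℝ => y ^ β) (β * (1 - x ^ 2) ^ (β - 1)) (1 - x ^ 2) :=
        Real.hasDerivAt_rpow_const (Or.inr hβ)
      have h3 : HasDerivAt (fun t : ℝ => (1 - t ^ 2) ^ β)
          (β * (1 - x ^ 2) ^ (β - 1) * -(2 * x)) x := by have := h2.comp x h1; exact this
      have h4 : HasDerivAt (fun t : ℝ => t * (1 - t ^ 2) ^ β)
          (1 * (1 - x ^ 2) ^ β + x * (β * (1 - x ^ 2) ^ (β - 1) * -(2 * x))) x :=
        (hasDerivAt_id x).mul h3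
      have hβc : β - 1 = c := by simp only [hβdef, hcdef]; ring
      rw [hβc] at h4
      convert h4 using 1
      rcases eq_or_lt_of_le hx2 with h0 | h0
      · have hx1 : x ^ 2 = 1 := by linarith
        rw [← h0, Real.zero_rpow hβ0, hx1]
        have : (d : ℝ) = 2 * β + 1 := by simp only [hβdef]; ring
        rw [this]
        linear_combination (2 * β * ((0:ℝ) ^ c)) * hx1
      · have hsplit : (1 - x ^ 2) ^ β = (1 - x ^ 2) ^ c * (1 - x ^ 2) := by
          rw [← Real.rpow_add_one (ne_of_gt h0) c]
          congr 1
          simp only [hβdef, hcdef]; ring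
        rw [hsplit]
        have : (d : ℝ) = 2 * β + 1 := by simp only [hβdef]; ring
        rw [this]
        ring
    have hβnn : (0:ℝ) ≤ β := by linarith
    have hu' : IntervalIntegrable (fun x => κ * Real.exp (κ * x)) volume (-1) 1 :=
      ((continuous_const.mul hcontE)).intervalIntegrable _ _
    have hv' : IntervalIntegrable (fun x => (1 - x ^ 2) ^ c * (1 - (d:ℝ) * x ^ 2))
        volume (-1) 1 :=
      (hcontW.mul (by continuity)).intervalIntegrable _ _
    have ibp := intervalIntegral.integral_mul_deriv_eq_deriv_mul hu hv hu' hv'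
    have hv1 : (1:ℝ) * (1 - (1:ℝ) ^ 2) ^ β = 0 := by
      norm_num [Real.zero_rpow hβ0]
    have hvm1 : (-1:ℝ) * (1 - (-1:ℝ) ^ 2) ^ β = 0 := by
      norm_num [Real.zero_rpow hβ0]
    rw [hv1, hvm1] at ibp
    -- LHS of ibp equals Z - d * N
    have hLHS : (∫ x in (-1:ℝ)..1, Real.exp (κ * x) * ((1 - x ^ 2) ^ c * (1 - (d:ℝ) * x ^ 2)))
        = Z - (d:ℝ) * N := by
      have heq : Set.EqOn
          (fun x : ℝ => Real.exp (κ * x) * ((1 - x ^ 2) ^ c * (1 - (d:ℝ) * x ^ 2)))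
          (fun x : ℝ => (Real.exp (κ * x) * (1 - x ^ 2) ^ c) -
            (d:ℝ) * (x ^ 2 * (Real.exp (κ * x) * (1 - x ^ 2) ^ c))) (Set.uIcc (-1:ℝ) 1) := by
        intro x _; ring
      rw [intervalIntegral.integral_congr heq,
        intervalIntegral.integral_sub (f := fun x => Real.exp (κ * x) * (1 - x ^ 2) ^ c)
          (g := fun x => (d:ℝ) * (x ^ 2 * (Real.exp (κ * x) * (1 - x ^ 2) ^ c))) ((hcontE.mul hcontW).intervalIntegrable _ _)
          (((continuous_const.mul ((continuous_pow 2).mul (hcontE.mul hcontW)))).intervalIntegrable _ _),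
        intervalIntegral.integral_const_mul]
    -- RHS integral equals κ * (odd integral)
    have hRHS : (∫ x in (-1:ℝ)..1, κ * Real.exp (κ * x) * (x * (1 - x ^ 2) ^ β))
        = κ * ∫ x in (-1:ℝ)..1, x * (Real.exp (κ * x) * (1 - x ^ 2) ^ β) := by
      rw [← intervalIntegral.integral_const_mul]
      apply intervalIntegral.integral_congr
      intro x _; ring
    rw [hLHS, hRHS] at ibp
    have hP : 0 < ∫ x in (-1:ℝ)..1, x * (Real.exp (κ * x) * (1 - x ^ 2) ^ β) :=
      odd_pos hβnn hκ
    have hlt : Z < (d:ℝ) * N := by nlinarith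
    have hd0 : (0:ℝ) < (d:ℝ) := by linarith
    rw [div_lt_div_iff₀ hd0 hZ]
    linarith
end
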